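/- Let Φ be a Leonard system with parameter array ({θ_i}; {θ*_i}; {φ_i}; {ϕ_i}), φ = φ_1⋯φ_d, ϕ = ϕ_1⋯ϕ_d, bilinear form ⟨·,·⟩, and nonzero vectors ξ_0 ∈ E_0V, ξ_d ∈ E_dV, ξ*_0 ∈ E*_0V, ξ*_d ∈ E*_dV. Then ⟨ξ_0,ξ*_0⟩/⟨ξ_0,ξ*_d⟩ = (ϕ/φ) · ⟨ξ_d,ξ*_0⟩/⟨ξ_d,ξ*_d⟩. -/

import Mathlib

/-!
Every `E i` and `E* i` has rank one and is a polynomial in `A`, resp. `A*`, so the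
antiautomorphism fixes it and is adjoint to itself for `⟨·,·⟩`. Writing `E 0 = ξ₀ f₀ᵀ`,
`E d = ξ_d f_dᵀ`, `E*₀ = ξ*₀ g₀ᵀ`, this gives `⟨ξ₀, v⟩ = (f₀ ⬝ v) ⟨ξ₀, ξ₀⟩`, and the claim
becomes `(f₀ ⬝ ξ*₀) / (f₀ ⬝ ξ*_d) = ϕ / φ * (f_d ⬝ ξ*₀) / (f_d ⬝ ξ*_d)`. Telescoping,
`φ = ∏ (θ*₀ - θ*ᵢ) tr (τ_d(A) E*₀) = ∏ (θ*₀ - θ*ᵢ) τ_d(θ_d) tr (E_d E*₀)`, and likewise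
`ϕ` with `η_d(θ₀) tr (E₀ E*₀)`; the two are tied together by
`E*₀ τ_d(A) E*_d = E*₀ η_d(A) E*_d`, true because `τ_d - η_d` has degree `< d` while `A`
raises the `E*`-level by at most one. All the traces and coordinates that must not vanish are
controlled by irreducibility: a polynomial of degree `r` in `A` lifts `E*₀ V` exactly `r` levels.
-/

open Matrix Polynomial

/-- A Leonard system in the matrix algebra `Mat_{d+1}(K)`: multiplicity-free
elements `A`, `Astar` with orderings `E`, `Estar` of their primitive idempotents
satisfying the irreducible-tridiagonality conditions. -/
structure LeonardSystem (K : Type*) [Field K] (d : ℕ) where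
  A : Matrix (Fin (d+1)) (Fin (d+1)) K
  Astar : Matrix (Fin (d+1)) (Fin (d+1)) K
  E : Fin (d+1) → Matrix (Fin (d+1)) (Fin (d+1)) K
  Estar : Fin (d+1) → Matrix (Fin (d+1)) (Fin (d+1)) K
  θ : Fin (d+1) → K
  θs : Fin (d+1) → K
  θ_inj : Function.Injective θ
  θs_inj : Function.Injective θs
  E_ne : ∀ i, E i ≠ 0
  Es_ne : ∀ i, Estar i ≠ 0
  E_mul : ∀ i j, E i * E j = if i = j then E i else 0
  Es_mul : ∀ i j, Estar i * Estar j = if i = j then Estar i else 0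
  E_sum : ∑ i, E i = 1
  Es_sum : ∑ i, Estar i = 1
  A_eq : A = ∑ i, θ i • E i
  As_eq : Astar = ∑ i, θs i • Estar i
  trid0 : ∀ i j : Fin (d+1), ((i : ℤ) - (j : ℤ)).natAbs > 1 → E i * Astar * E j = 0
  trid1 : ∀ i j : Fin (d+1), ((i : ℤ) - (j : ℤ)).natAbs = 1 → E i * Astar * E j ≠ 0
  strid0 : ∀ i j : Fin (d+1), ((i : ℤ) - (j : ℤ)).natAbs > 1 → Estar i * A * Estar j = 0
  strid1 : ∀ i j : Fin (d+1), ((i : ℤ) - (j : ℤ)).natAbs = 1 → Estar i * A * Estar j ≠ 0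

namespace LeonardSystem

variable {K : Type*} [Field K] {d : ℕ}

/-- Eigenvalues indexed by `ℕ` (junk value outside range). -/
def θN (L : LeonardSystem K d) (i : ℕ) : K := if h : i < d + 1 then L.θ ⟨i, h⟩ else 0

def θsN (L : LeonardSystem K d) (i : ℕ) : K := if h : i < d + 1 then L.θs ⟨i, h⟩ else 0

/-- `τ_i(A) = (A-θ₀)(A-θ₁)⋯(A-θ_{i-1})`. -/
def tauA (L : LeonardSystem K d) : ℕ → Matrix (Fin (d+1)) (Fin (d+1)) K
  | 0 => 1
  | i + 1 => L.tauA i * (L.A - L.θN i • 1)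

/-- `η_i(A) = (A-θ_d)(A-θ_{d-1})⋯(A-θ_{d-i+1})`. -/
def etaA (L : LeonardSystem K d) : ℕ → Matrix (Fin (d+1)) (Fin (d+1)) K
  | 0 => 1
  | i + 1 => L.etaA i * (L.A - L.θN (d - i) • 1)

/-- `τ*_i(A*)`. -/
def tausA (L : LeonardSystem K d) : ℕ → Matrix (Fin (d+1)) (Fin (d+1)) K
  | 0 => 1
  | i + 1 => L.tausA i * (L.Astar - L.θsN i • 1)

/-- `η*_i(A*)`. -/
def etasA (L : LeonardSystem K d) : ℕ → Matrix (Fin (d+1)) (Fin (d+1)) K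
  | 0 => 1
  | i + 1 => L.etasA i * (L.Astar - L.θsN (d - i) • 1)

/-- Scalar `τ_i(x)`. -/
def tauS (L : LeonardSystem K d) (i : ℕ) (x : K) : K := ∏ j ∈ Finset.range i, (x - L.θN j)

/-- Scalar `η_i(x)`. -/
def etaS (L : LeonardSystem K d) (i : ℕ) (x : K) : K := ∏ j ∈ Finset.range i, (x - L.θN (d - j))

/-- Scalar `τ*_i(x)`. -/
def tausS (L : LeonardSystem K d) (i : ℕ) (x : K) : K := ∏ j ∈ Finset.range i, (x - L.θsN j)

/-- Scalar `η*_i(x)`. -/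
def etasS (L : LeonardSystem K d) (i : ℕ) (x : K) : K := ∏ j ∈ Finset.range i, (x - L.θsN (d - j))

/-- First split sequence `φ_i`. -/
noncomputable def varphi (L : LeonardSystem K d) (i : ℕ) : K :=
  (L.θsN 0 - L.θsN i) * (L.tauA i * L.Estar 0).trace / (L.tauA (i-1) * L.Estar 0).trace

/-- Second split sequence `ϕ_i`. -/
noncomputable def phi (L : LeonardSystem K d) (i : ℕ) : K :=
  (L.θsN 0 - L.θsN i) * (L.etaA i * L.Estar 0).trace / (L.etaA (i-1) * L.Estar 0).trace

/-- `φ₁φ₂⋯φ_r`. -/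
noncomputable def varphiProd (L : LeonardSystem K d) (r : ℕ) : K :=
  ∏ j ∈ Finset.range r, L.varphi (j + 1)

/-- `ϕ₁ϕ₂⋯ϕ_r`. -/
noncomputable def phiProd (L : LeonardSystem K d) (r : ℕ) : K :=
  ∏ j ∈ Finset.range r, L.phi (j + 1)

/-- `φ_d φ_{d-1} ⋯ φ_{d-r+1}`. -/
noncomputable def varphiRevProd (L : LeonardSystem K d) (r : ℕ) : K :=
  ∏ j ∈ Finset.range r, L.varphi (d - j)

/-- `ϕ_d ϕ_{d-1} ⋯ ϕ_{d-r+1}`. -/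
noncomputable def phiRevProd (L : LeonardSystem K d) (r : ℕ) : K :=
  ∏ j ∈ Finset.range r, L.phi (d - j)

end LeonardSystem

section RankOne

variable {K l m : Type*} [Field K] [Fintype m]

theorem Matrix.dotProduct_ne_zero_of_vecMulVec_mulVec_ne_zero {ξ f v : m → K}
    (h : vecMulVec ξ f *ᵥ v ≠ 0) : f ⬝ᵥ v ≠ 0 := fun hf =>
  h (by rw [vecMulVec_mulVec, hf, MulOpposite.op_zero, zero_smul])

variable [DecidableEq m]

theorem Matrix.exists_mulVec_ne_zero {A : Matrix l m K} (hA : A ≠ 0) : ∃ v, A *ᵥ v ≠ 0 := by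
  by_contra! h
  exact hA (ext_of_mulVec_single fun i => by simp only [h, zero_mulVec])

theorem Matrix.exists_eq_vecMulVec_of_rank_eq_one {A : Matrix l m K} (hA : A.rank = 1)
    {v : m → K} {ξ : l → K} (hv : A *ᵥ v = ξ) (hξ : ξ ≠ 0) :
    ∃ f : m → K, A = vecMulVec ξ f := by
  have hspan := (finrank_eq_one_iff_of_nonzero' (⟨ξ, v, hv⟩ : LinearMap.range A.mulVecLin)
    fun h => hξ (congrArg Subtype.val h)).mp hA
  choose f hf using fun i : m => hspan ⟨A *ᵥ Pi.single i 1, Pi.single i 1, rfl⟩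
  refine ⟨f, ext_of_mulVec_single fun i => ?_⟩
  rw [vecMulVec_mulVec, dotProduct_single, mul_one, op_smul_eq_smul]
  exact (congrArg Subtype.val (hf i)).symm

theorem Matrix.exists_eq_vecMulVec_of_rank_eq_one' {A : Matrix m m K} (hA : A.rank = 1) :
    ∃ (ξ : m → K) (f : m → K), A = vecMulVec ξ f := by
  obtain ⟨v, hv⟩ := exists_mulVec_ne_zero (fun h : A = 0 => by simp [h] at hA)
  obtain ⟨f, hf⟩ := exists_eq_vecMulVec_of_rank_eq_one hA rfl hv
  exact ⟨_, f, hf⟩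

theorem Matrix.mul_mul_ne_zero_of_rank_eq_one {E : Matrix m m K} (hE : E.rank = 1)
    {X Y : Matrix m m K} (hX : X * E ≠ 0) (hY : E * Y ≠ 0) : X * E * Y ≠ 0 := by
  obtain ⟨ξ, f, rfl⟩ := exists_eq_vecMulVec_of_rank_eq_one' hE
  rw [mul_vecMulVec] at hX ⊢
  rw [vecMulVec_mul] at hY ⊢
  simp only [ne_eq, vecMulVec_eq_zero, not_or] at hX hY ⊢
  exact ⟨hX.1, hY.2⟩

theorem Matrix.mulVec_ne_zero_of_rank_eq_one {E : Matrix m m K} (hE : E.rank = 1)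
    {ξ : m → K} (hξ : E *ᵥ ξ = ξ) (hξ0 : ξ ≠ 0) {X : Matrix m m K} (hX : X * E ≠ 0) :
    X *ᵥ ξ ≠ 0 := by
  obtain ⟨f, rfl⟩ := exists_eq_vecMulVec_of_rank_eq_one hE hξ hξ0
  rw [mul_vecMulVec] at hX
  exact fun h => hX (by simp [h])

theorem Matrix.mul_mul_eq_trace_smul_of_rank_eq_one {E : Matrix m m K} (hE : E.rank = 1)
    (X : Matrix m m K) : E * X * E = (X * E).trace • E := by
  obtain ⟨ξ, f, rfl⟩ := exists_eq_vecMulVec_of_rank_eq_one' hE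
  rw [vecMulVec_mul, vecMulVec_mul_vecMulVec, mul_vecMulVec, trace_vecMulVec, ← dotProduct_mulVec,
    dotProduct_comm]
  ext i j
  simp [vecMulVec_apply, mul_left_comm]

theorem Matrix.trace_eq_one_of_rank_eq_one {E : Matrix m m K} (hE : IsIdempotentElem E)
    (hr : E.rank = 1) : E.trace = 1 := by
  have h := mul_mul_eq_trace_smul_of_rank_eq_one hr 1
  rw [mul_one, hE.eq, one_mul] at h
  have hE0 : E ≠ 0 := fun h => by simp [h] at hr
  have : (E.trace - 1) • E = 0 := by rw [sub_smul, one_smul, ← h, sub_self]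
  exact sub_eq_zero.mp ((smul_eq_zero.mp this).resolve_right hE0)

theorem CompleteOrthogonalIdempotents.rank_eq_one {ι : Type*} [Fintype ι]
    {e : ι → Matrix m m K} (he : CompleteOrthogonalIdempotents e) (hne : ∀ i, e i ≠ 0)
    (hcard : Fintype.card ι = Fintype.card m) (i : ι) : (e i).rank = 1 := by
  classical
  choose w hw using fun j => exists_mulVec_ne_zero (hne j)
  have hex : ∀ j k, e j *ᵥ (e k *ᵥ w k) = if j = k then e k *ᵥ w k else 0 := by
    intro j k
    rw [mulVec_mulVec, he.mul_eq]
    split_ifs with h <;> simp [h]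
  have hli : LinearIndependent K fun j => e j *ᵥ w j := by
    rw [Fintype.linearIndependent_iff]
    intro c hc j
    have := congrArg (e j *ᵥ ·) hc
    simp only [mulVec_sum, mulVec_smul, hex, smul_ite, smul_zero, Finset.sum_ite_eq,
      Finset.mem_univ, if_true, mulVec_zero] at this
    exact (smul_eq_zero.mp this).resolve_right (hw j)
  have hspan := hli.span_eq_top_of_card_eq_finrank' (by simpa using hcard)
  have hrange : LinearMap.range (e i).mulVecLin = K ∙ (e i *ᵥ w i) := by
    refine le_antisymm ?_ ?_
    · rintro _ ⟨v, rfl⟩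
      obtain ⟨c, rfl⟩ := (Submodule.mem_span_range_iff_exists_fun K).mp
        (hspan ▸ Submodule.mem_top : v ∈ Submodule.span K _)
      simp [hex, Submodule.mem_span_singleton]
    · rw [Submodule.span_le, Set.singleton_subset_iff]
      exact ⟨e i *ᵥ w i, by simp [hex]⟩
  rw [Matrix.rank, hrange, finrank_span_singleton (hw i)]

end RankOne

section Polynomials

variable {K R : Type*} [Field K] [Ring R] [Algebra K R]

theorem map_one_of_antimul_of_surjective {M : Type*} [MulOneClass M] {σ : M → M}
    (hanti : ∀ x y, σ (x * y) = σ y * σ x) (hσ : Function.Surjective σ) : σ 1 = 1 := by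
  obtain ⟨u, hu⟩ := hσ 1
  calc σ 1 = σ 1 * σ u := by rw [hu, mul_one]
    _ = 1 := by rw [← hanti, mul_one, hu]

theorem map_aeval_of_antimul (σ : R →ₗ[K] R) (hanti : ∀ x y, σ (x * y) = σ y * σ x)
    (hσ1 : σ 1 = 1) {a : R} (ha : σ a = a) (p : K[X]) : σ (aeval a p) = aeval a p := by
  have hpow : ∀ k, σ (a ^ k) = a ^ k := by
    intro k
    induction k with
    | zero => rwa [pow_zero]
    | succ k ih =>
      rw [pow_succ', hanti, ih, ha]
      exact (Commute.self_pow a k).symm.eq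
  simp only [aeval_eq_sum_range, map_sum, map_smul, hpow]

variable {ι : Type*} [Fintype ι] [DecidableEq ι] {e : ι → R}

theorem OrthogonalIdempotents.mul_sum_smul (he : OrthogonalIdempotents e) (c : ι → K)
    (j : ι) : e j * ∑ i, c i • e i = c j • e j := by
  simp [Finset.mul_sum, he.mul_eq]

theorem CompleteOrthogonalIdempotents.aeval_sum_smul (he : CompleteOrthogonalIdempotents e)
    (θ : ι → K) (p : K[X]) : aeval (∑ i, θ i • e i) p = ∑ i, p.eval (θ i) • e i := by
  induction p using Polynomial.induction_on with
  | C a => simp [Algebra.algebraMap_eq_smul_one, ← he.complete, Finset.smul_sum]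
  | add p q hp hq => simp only [map_add, hp, hq, eval_add, add_smul, Finset.sum_add_distrib]
  | monomial k a h =>
    rw [pow_succ, ← mul_assoc, map_mul, h, aeval_X, Finset.sum_mul]
    simp only [smul_mul_assoc, he.toOrthogonalIdempotents.mul_sum_smul, smul_smul]
    simp [mul_assoc]

theorem CompleteOrthogonalIdempotents.aeval_basis (he : CompleteOrthogonalIdempotents e)
    {θ : ι → K} (hθ : Function.Injective θ) (i : ι) :
    aeval (∑ j, θ j • e j) (Lagrange.basis Finset.univ θ i) = e i := by
  rw [he.aeval_sum_smul, Finset.sum_eq_single i]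
  · rw [Lagrange.eval_basis_self hθ.injOn (Finset.mem_univ i), one_smul]
  · intro j _ hji
    rw [Lagrange.eval_basis_of_ne hji.symm (Finset.mem_univ j), zero_smul]
  · simp

end Polynomials

section Hessenberg

variable {K R : Type*} [Field K] [Ring R] [Algebra K R] {n : ℕ}

/-- `M` is an unreduced upper Hessenberg matrix in the block decomposition given by `e`, whose
`(i, j)` block is `e i * M * e j`. -/
structure IsUnreducedHessenberg (e : Fin (n + 1) → R) (M : R) : Prop where
  mul_mul_eq_zero : ∀ i j : Fin (n + 1), (j : ℕ) + 1 < i → e i * M * e j = 0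
  mul_mul_ne_zero : ∀ i j : Fin (n + 1), (i : ℕ) = j + 1 → e i * M * e j ≠ 0

variable {e : Fin (n + 1) → R} {M U : R}

theorem mul_mul_eq_sum_mul (he : ∑ i, e i = 1) (j : Fin (n + 1)) (M U : R) :
    e j * M * U = ∑ l, e j * M * e l * U := by
  rw [← Finset.sum_mul, ← Finset.mul_sum, he, mul_one]

theorem mul_pow_mul_eq_zero (he : ∑ i, e i = 1)
    (hM : ∀ i j : Fin (n + 1), (j : ℕ) + 1 < i → e i * M * e j = 0) {k : ℕ}
    (hU : ∀ j : Fin (n + 1), k < j → e j * U = 0) (i : ℕ) (j : Fin (n + 1)) (hj : k + i < j) :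
    e j * M ^ i * U = 0 := by
  induction i generalizing j with
  | zero => simpa using hU j (by omega)
  | succ i ih =>
    rw [pow_succ', ← mul_assoc, mul_assoc, mul_mul_eq_sum_mul he]
    refine Finset.sum_eq_zero fun l _ => ?_
    by_cases hl : k + i < l
    · rw [mul_assoc, ← mul_assoc (e l), ih l hl, mul_zero]
    · rw [hM j l (by omega), zero_mul]

theorem mul_aeval_mul_eq_zero (he : ∑ i, e i = 1)
    (hM : ∀ i j : Fin (n + 1), (j : ℕ) + 1 < i → e i * M * e j = 0) {k : ℕ}
    (hU : ∀ j : Fin (n + 1), k < j → e j * U = 0) (p : K[X]) (j : Fin (n + 1))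
    (hj : k + p.natDegree < j) : e j * aeval M p * U = 0 := by
  rw [aeval_eq_sum_range, Finset.mul_sum, Finset.sum_mul]
  refine Finset.sum_eq_zero fun i hi => ?_
  have := Finset.mem_range.mp hi
  rw [mul_smul_comm, smul_mul_assoc, mul_pow_mul_eq_zero he hM hU i j (by omega), smul_zero]

theorem mul_aeval_mul_eq_of_isMonicOfDegree (he : ∑ i, e i = 1)
    (hM : ∀ i j : Fin (n + 1), (j : ℕ) + 1 < i → e i * M * e j = 0) {k : ℕ}
    (hU : ∀ j : Fin (n + 1), k < j → e j * U = 0) {p q : K[X]} {r : ℕ}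
    (hp : p.IsMonicOfDegree r) (hq : q.IsMonicOfDegree r) (j : Fin (n + 1))
    (hj : (j : ℕ) = k + r) :
    e j * aeval M p * U = e j * aeval M q * U := by
  rcases eq_or_ne r 0 with rfl | hr
  · rw [isMonicOfDegree_zero_iff.mp hp, isMonicOfDegree_zero_iff.mp hq]
  · rw [← sub_eq_zero, ← sub_mul, ← mul_sub, ← map_sub]
    exact mul_aeval_mul_eq_zero he hM hU _ j (by have := hp.natDegree_sub_lt hr hq; omega)

end Hessenberg

section Flags

variable {K m : Type*} [Field K] [Fintype m] [DecidableEq m] {n : ℕ}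
  {e e' : Fin (n + 1) → Matrix m m K} {M U : Matrix m m K}

theorem IsUnreducedHessenberg.mul_pow_mul_ne_zero (hM : IsUnreducedHessenberg e M)
    (he : CompleteOrthogonalIdempotents e) (hrank : ∀ i, (e i).rank = 1) {k : Fin (n + 1)}
    (hU : ∀ j : Fin (n + 1), (k : ℕ) < j → e j * U = 0) (hUk : e k * U ≠ 0) (i : ℕ)
    (j : Fin (n + 1)) (hj : (j : ℕ) = k + i) : e j * M ^ i * U ≠ 0 := by
  induction i generalizing j with
  | zero => rwa [pow_zero, mul_one, show j = k from Fin.ext hj]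
  | succ i ih =>
    set j' : Fin (n + 1) := ⟨k + i, by omega⟩
    have hsum : e j * M ^ (i + 1) * U = e j * M * e j' * (M ^ i * U) := by
      rw [pow_succ', ← mul_assoc, mul_assoc, mul_mul_eq_sum_mul he.complete,
        Finset.sum_eq_single j']
      · intro l _ hl
        rcases lt_or_gt_of_ne (Fin.val_ne_of_ne hl) with hl | hl
        · rw [hM.mul_mul_eq_zero j l (by simp [j'] at hl; omega), zero_mul]
        · rw [mul_assoc, ← mul_assoc (e l),
            mul_pow_mul_eq_zero he.complete hM.mul_mul_eq_zero hU i l (by simpa [j'] using hl),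
            mul_zero]
      · simp
    rw [hsum]
    refine mul_mul_ne_zero_of_rank_eq_one (hrank j')
      (hM.mul_mul_ne_zero j j' (by simp [j']; omega)) ?_
    rw [← mul_assoc]
    exact ih j' rfl

theorem IsUnreducedHessenberg.mul_aeval_mul_ne_zero (hM : IsUnreducedHessenberg e M)
    (he : CompleteOrthogonalIdempotents e) (hrank : ∀ i, (e i).rank = 1) {k : Fin (n + 1)}
    (hU : ∀ j : Fin (n + 1), (k : ℕ) < j → e j * U = 0) (hUk : e k * U ≠ 0) {p : K[X]}
    (hp : p ≠ 0) (j : Fin (n + 1)) (hj : (j : ℕ) = k + p.natDegree) :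
    e j * aeval M p * U ≠ 0 := by
  rw [aeval_eq_sum_range, Finset.mul_sum, Finset.sum_mul, Finset.sum_eq_single p.natDegree]
  · rw [mul_smul_comm, smul_mul_assoc]
    exact smul_ne_zero (leadingCoeff_ne_zero.mpr hp)
      (hM.mul_pow_mul_ne_zero he hrank hU hUk _ j hj)
  · intro i hi hne
    have := Finset.mem_range.mp hi
    rw [mul_smul_comm, smul_mul_assoc,
      mul_pow_mul_eq_zero he.complete hM.mul_mul_eq_zero hU i j (by omega), smul_zero]
  · simp

theorem IsUnreducedHessenberg.mul_first_ne_zero {θ : Fin (n + 1) → K}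
    (hH : IsUnreducedHessenberg e' (∑ i, θ i • e i)) (he : CompleteOrthogonalIdempotents e)
    (hθ : Function.Injective θ) (he' : CompleteOrthogonalIdempotents e')
    (hrank' : ∀ i, (e' i).rank = 1) (i : Fin (n + 1)) : e i * e' 0 ≠ 0 := by
  have h00 : e' 0 * e' 0 ≠ 0 := by
    rw [(he'.idem 0).eq]
    exact fun h => by simpa [h] using hrank' 0
  have hU : ∀ j : Fin (n + 1), ((0 : Fin (n + 1)) : ℕ) < j → e' j * e' 0 = 0 :=
    fun j hj => he'.ortho fun h => by simp [h] at hj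
  -- `e i` is a polynomial of degree `n` in `∑ j, θ j • e j`, which lifts `e' 0` to level `n`
  have := hH.mul_aeval_mul_ne_zero he' hrank' hU h00
    (Lagrange.basis_ne_zero hθ.injOn (Finset.mem_univ i)) (Fin.last n)
    (by simp [Lagrange.natDegree_basis hθ.injOn (Finset.mem_univ i)])
  rw [he.aeval_basis hθ, mul_assoc] at this
  exact right_ne_zero_of_mul this

theorem IsUnreducedHessenberg.first_mul_ne_zero {θ' : Fin (n + 1) → K}
    (hH : IsUnreducedHessenberg e (∑ i, θ' i • e' i)) (he : CompleteOrthogonalIdempotents e)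
    (hrank : ∀ i, (e i).rank = 1) (he' : CompleteOrthogonalIdempotents e') {k : Fin (n + 1)}
    {r : ℕ} (hkr : (k : ℕ) + r ≤ n) (hU' : ∀ j : Fin (n + 1), r < j → e' j * U = 0)
    (hU : ∀ j : Fin (n + 1), (k : ℕ) < j → e j * U = 0) (hUk : e k * U ≠ 0) :
    e' 0 * U ≠ 0 := by
  -- Otherwise the nodal polynomial of `θ' 1, …, θ' r`, of degree `r` in `∑ i, θ' i • e' i`,
  -- would kill `U`, whereas it lifts the top level `k` of `U` to level `k + r`.
  intro h0
  set s := Finset.Ioc (0 : Fin (n + 1)) ⟨r, by omega⟩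
  have hq : aeval (∑ i, θ' i • e' i) (Lagrange.nodal s θ') * U = 0 := by
    rw [he'.aeval_sum_smul, Finset.sum_mul]
    refine Finset.sum_eq_zero fun j _ => ?_
    rw [smul_mul_assoc]
    rcases Nat.eq_zero_or_pos j with hj | hj
    · rw [show j = 0 from Fin.ext hj, h0, smul_zero]
    by_cases hjr : r < (j : ℕ)
    · rw [hU' j hjr, smul_zero]
    · have hjs : j ∈ s := by
        simp only [s, Finset.mem_Ioc, Fin.lt_def, Fin.le_def, Fin.val_zero]
        omega
      rw [Lagrange.eval_nodal_at_node hjs, zero_smul]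
  have := hH.mul_aeval_mul_ne_zero he hrank hU hUk (p := Lagrange.nodal s θ')
    Lagrange.nodal_ne_zero ⟨k + r, by omega⟩ (by simp [s, Fin.card_Ioc])
  rw [mul_assoc, hq, mul_zero] at this
  exact this rfl

end Flags

theorem bilin_div_bilin_eq {K ι : Type*} [Field K] [Fintype ι] [DecidableEq ι]
    {σ : Matrix ι ι K →ₗ[K] Matrix ι ι K} {B : (ι → K) →ₗ[K] (ι → K) →ₗ[K] K}
    (hB : ∀ (X : Matrix ι ι K) (u v : ι → K), B (X *ᵥ u) v = B u (σ X *ᵥ v))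
    {E E' : Matrix ι ι K} (hσE : σ E = E) (hσE' : σ E' = E') {ξ ξ' f g : ι → K}
    (hf : E = vecMulVec ξ f) (hg : E' = vecMulVec ξ' g) (hξ : E *ᵥ ξ = ξ) (hξ' : E' *ᵥ ξ' = ξ')
    (hEξ' : E *ᵥ ξ' ≠ 0) (hE'ξ : E' *ᵥ ξ ≠ 0) (v : ι → K) :
    B ξ ξ' / B ξ v = f ⬝ᵥ ξ' / f ⬝ᵥ v * (B ξ' ξ' / B ξ' ξ') := by
  -- the last factor is `1`, or `0` when `B` vanishes on `ξ` and `ξ'` altogether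
  have hleft : ∀ w, B ξ w = f ⬝ᵥ w * B ξ ξ := fun w => by
    conv_lhs => rw [← hξ, hB, hσE, hf, vecMulVec_mulVec, op_smul_eq_smul, map_smul,
      smul_eq_mul]
  have hright : ∀ u, B u ξ' = g ⬝ᵥ u * B ξ' ξ' := fun u => by
    conv_lhs => rw [← hξ', ← hσE', ← hB, hg, vecMulVec_mulVec, op_smul_eq_smul, map_smul,
      LinearMap.smul_apply, smul_eq_mul]
  have hf' := dotProduct_ne_zero_of_vecMulVec_mulVec_ne_zero (hf ▸ hEξ')
  have hg' := dotProduct_ne_zero_of_vecMulVec_mulVec_ne_zero (hg ▸ hE'ξ)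
  have hβ : f ⬝ᵥ ξ' * B ξ ξ = g ⬝ᵥ ξ * B ξ' ξ' := (hleft ξ').symm.trans (hright ξ)
  rw [hleft ξ', hleft v]
  rcases eq_or_ne (B ξ' ξ') 0 with h | h
  · have : B ξ ξ = 0 := by simpa [h, hf'] using hβ
    simp [this, h]
  · have : B ξ ξ ≠ 0 := fun h0 => h (by simpa [h0, hg'] using hβ)
    rw [mul_div_mul_right _ _ this, div_self h, mul_one]

theorem Finset.prod_range_mul_div_telescope {K : Type*} [Field K] (c t : ℕ → K) {r : ℕ}
    (ht : ∀ j < r, t j ≠ 0) :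
    (∏ j ∈ Finset.range r, c j * t (j + 1) / t j) * t 0 =
      (∏ j ∈ Finset.range r, c j) * t r := by
  induction r with
  | zero => simp
  | succ r ih =>
    rw [Finset.prod_range_succ, Finset.prod_range_succ, mul_right_comm,
      ih fun j hj => ht j (by omega)]
    field_simp [ht r (by omega)]

namespace LeonardSystem

variable {K : Type*} [Field K] {d : ℕ} (L : LeonardSystem K d)

def dual : LeonardSystem K d where
  A := L.Astar
  Astar := L.A
  E := L.Estar
  Estar := L.E
  θ := L.θs
  θs := L.θ
  θ_inj := L.θs_inj
  θs_inj := L.θ_inj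
  E_ne := L.Es_ne
  Es_ne := L.E_ne
  E_mul := L.Es_mul
  Es_mul := L.E_mul
  E_sum := L.Es_sum
  Es_sum := L.E_sum
  A_eq := L.As_eq
  As_eq := L.A_eq
  trid0 := L.strid0
  trid1 := L.strid1
  strid0 := L.trid0
  strid1 := L.trid1

theorem completeOrthogonalIdempotents : CompleteOrthogonalIdempotents L.E :=
  ⟨OrthogonalIdempotents.iff_mul_eq.mpr L.E_mul, L.E_sum⟩

theorem completeOrthogonalIdempotents_rev : CompleteOrthogonalIdempotents (L.E ∘ Fin.rev) :=
  (CompleteOrthogonalIdempotents.equiv Fin.revPerm).mpr L.completeOrthogonalIdempotents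

theorem E_mul_E_of_ne {i j : Fin (d + 1)} (h : i ≠ j) : L.E i * L.E j = 0 := by
  rw [L.E_mul, if_neg h]

theorem rank_E (i : Fin (d + 1)) : (L.E i).rank = 1 :=
  L.completeOrthogonalIdempotents.rank_eq_one L.E_ne (by simp) i

theorem rank_Estar (i : Fin (d + 1)) : (L.Estar i).rank = 1 :=
  L.dual.rank_E i

theorem trace_E (i : Fin (d + 1)) : (L.E i).trace = 1 :=
  trace_eq_one_of_rank_eq_one (L.completeOrthogonalIdempotents.idem i) (L.rank_E i)

theorem isUnreducedHessenberg : IsUnreducedHessenberg L.E L.Astar :=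
  ⟨fun i j h => L.trid0 i j (by omega), fun i j h => L.trid1 i j (by omega)⟩

theorem isUnreducedHessenberg_rev : IsUnreducedHessenberg (L.E ∘ Fin.rev) L.Astar :=
  ⟨fun i j h => L.trid0 _ _ (by simp only [Fin.val_rev] at h ⊢; omega),
    fun i j h => L.trid1 _ _ (by simp only [Fin.val_rev] at h ⊢; omega)⟩

theorem map_E
    {σ : Matrix (Fin (d + 1)) (Fin (d + 1)) K →ₗ[K] Matrix (Fin (d + 1)) (Fin (d + 1)) K}
    (hanti : ∀ X Y, σ (X * Y) = σ Y * σ X) (hσ1 : σ 1 = 1) (hA : σ L.A = L.A)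
    (i : Fin (d + 1)) : σ (L.E i) = L.E i := by
  rw [← L.completeOrthogonalIdempotents.aeval_basis L.θ_inj i, ← L.A_eq]
  exact map_aeval_of_antimul σ hanti hσ1 hA _

theorem E_mul_Estar_zero_ne_zero (i : Fin (d + 1)) : L.E i * L.Estar 0 ≠ 0 := by
  refine IsUnreducedHessenberg.mul_first_ne_zero ?_ L.completeOrthogonalIdempotents L.θ_inj
    L.dual.completeOrthogonalIdempotents L.rank_Estar i
  rw [← L.A_eq]
  exact L.dual.isUnreducedHessenberg

theorem E_mul_Estar_last_ne_zero (i : Fin (d + 1)) : L.E i * L.Estar (Fin.last d) ≠ 0 := by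
  have := IsUnreducedHessenberg.mul_first_ne_zero (e' := L.Estar ∘ Fin.rev) (by
    rw [← L.A_eq]
    exact L.dual.isUnreducedHessenberg_rev) L.completeOrthogonalIdempotents L.θ_inj
    L.dual.completeOrthogonalIdempotents_rev (fun j => L.rank_Estar _) i
  simpa using this

theorem E_mulVec_ne_zero_of_Estar_zero {ξ : Fin (d + 1) → K} (hξ : L.Estar 0 *ᵥ ξ = ξ)
    (hξ0 : ξ ≠ 0) (i : Fin (d + 1)) : L.E i *ᵥ ξ ≠ 0 :=
  mulVec_ne_zero_of_rank_eq_one (L.rank_Estar 0) hξ hξ0 (L.E_mul_Estar_zero_ne_zero i)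

theorem E_mulVec_ne_zero_of_Estar_last {ξ : Fin (d + 1) → K}
    (hξ : L.Estar (Fin.last d) *ᵥ ξ = ξ) (hξ0 : ξ ≠ 0) (i : Fin (d + 1)) : L.E i *ᵥ ξ ≠ 0 :=
  mulVec_ne_zero_of_rank_eq_one (L.rank_Estar _) hξ hξ0 (L.E_mul_Estar_last_ne_zero i)

theorem θN_val (i : Fin (d + 1)) : L.θN i = L.θ i := by
  rw [θN, dif_pos i.isLt]

theorem tauA_eq_aeval (r : ℕ) :
    L.tauA r = aeval L.A (Lagrange.nodal (Finset.range r) L.θN) := by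
  induction r with
  | zero => simp [tauA]
  | succ r ih =>
    simp [tauA, ih, Lagrange.nodal, Finset.prod_range_succ, Algebra.algebraMap_eq_smul_one]

theorem etaA_eq_aeval (r : ℕ) :
    L.etaA r = aeval L.A (Lagrange.nodal (Finset.range r) fun j => L.θN (d - j)) := by
  induction r with
  | zero => simp [etaA]
  | succ r ih =>
    simp [etaA, ih, Lagrange.nodal, Finset.prod_range_succ, Algebra.algebraMap_eq_smul_one]

theorem tauA_eq_sum (r : ℕ) : L.tauA r = ∑ i, L.tauS r (L.θ i) • L.E i := by
  rw [tauA_eq_aeval, L.A_eq, L.completeOrthogonalIdempotents.aeval_sum_smul]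
  simp only [Lagrange.eval_nodal, tauS]

theorem etaA_eq_sum (r : ℕ) : L.etaA r = ∑ i, L.etaS r (L.θ i) • L.E i := by
  rw [etaA_eq_aeval, L.A_eq, L.completeOrthogonalIdempotents.aeval_sum_smul]
  simp only [Lagrange.eval_nodal, etaS]

theorem tauS_eq_zero {r : ℕ} {i : Fin (d + 1)} (hi : (i : ℕ) < r) : L.tauS r (L.θ i) = 0 :=
  Finset.prod_eq_zero (Finset.mem_range.mpr hi) (by rw [θN_val, sub_self])

theorem tauS_ne_zero {r : ℕ} {i : Fin (d + 1)} (hi : r ≤ i) : L.tauS r (L.θ i) ≠ 0 := by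
  refine Finset.prod_ne_zero_iff.mpr fun j hj => sub_ne_zero.mpr fun h => ?_
  have hj := Finset.mem_range.mp hj
  rw [show j = ((⟨j, by omega⟩ : Fin (d + 1)) : ℕ) from rfl, θN_val] at h
  exact absurd (congrArg Fin.val (L.θ_inj h)) (by simp; omega)

theorem etaS_eq_zero {r : ℕ} {i : Fin (d + 1)} (hi : d < r + i) : L.etaS r (L.θ i) = 0 :=
  Finset.prod_eq_zero (Finset.mem_range.mpr (show d - i < r by omega))
    (by rw [show d - (d - (i : ℕ)) = i by omega, θN_val, sub_self])

theorem etaS_ne_zero {r : ℕ} {i : Fin (d + 1)} (hi : (i : ℕ) + r ≤ d) :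
    L.etaS r (L.θ i) ≠ 0 := by
  refine Finset.prod_ne_zero_iff.mpr fun j hj => sub_ne_zero.mpr fun h => ?_
  have hj := Finset.mem_range.mp hj
  rw [show d - j = ((⟨d - j, by omega⟩ : Fin (d + 1)) : ℕ) from rfl, θN_val] at h
  exact absurd (congrArg Fin.val (L.θ_inj h)) (by simp; omega)

theorem θsN_val (i : Fin (d + 1)) : L.θsN i = L.θs i := by
  rw [θsN, dif_pos i.isLt]

theorem Estar_mul_aeval_mul_Estar_eq_zero (p : K[X]) {j : Fin (d + 1)} (hj : p.natDegree < j) :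
    L.Estar j * (aeval L.A p * L.Estar 0) = 0 := by
  rw [← mul_assoc]
  exact mul_aeval_mul_eq_zero L.dual.completeOrthogonalIdempotents.complete
    L.dual.isUnreducedHessenberg.mul_mul_eq_zero (k := 0)
    (fun j hj => L.dual.E_mul_E_of_ne (by rintro rfl; simp at hj)) p j (by omega)

theorem trace_mul_Estar_ne_zero {X : Matrix (Fin (d + 1)) (Fin (d + 1)) K}
    (h : L.Estar 0 * (X * L.Estar 0) ≠ 0) : (X * L.Estar 0).trace ≠ 0 := fun ht =>
  h (by rw [← mul_assoc, mul_mul_eq_trace_smul_of_rank_eq_one (L.rank_Estar 0), ht, zero_smul])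

theorem trace_tauA_mul_Estar_ne_zero {r : ℕ} (hr : r ≤ d) :
    (L.tauA r * L.Estar 0).trace ≠ 0 := by
  -- in the ordering `E d, …, E 0` the top level of `τ_r(A) E*₀` is `d - r`
  refine L.trace_mul_Estar_ne_zero (IsUnreducedHessenberg.first_mul_ne_zero (e := L.E ∘ Fin.rev)
    (θ' := L.θs) (k := ⟨d - r, by omega⟩) (r := r) ?_ L.completeOrthogonalIdempotents_rev
    (fun i => L.rank_E _) L.dual.completeOrthogonalIdempotents (by simp; omega) ?_ ?_ ?_)
  · rw [← L.As_eq]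
    exact L.isUnreducedHessenberg_rev
  · intro j hj
    rw [tauA_eq_aeval]
    exact L.Estar_mul_aeval_mul_Estar_eq_zero _ (by simpa using hj)
  · intro j hj
    rw [← mul_assoc, Function.comp_apply, L.tauA_eq_sum,
      L.completeOrthogonalIdempotents.mul_sum_smul,
      L.tauS_eq_zero (by simp only [Fin.val_rev] at hj ⊢; omega), zero_smul, zero_mul]
  · rw [← mul_assoc, Function.comp_apply, L.tauA_eq_sum,
      L.completeOrthogonalIdempotents.mul_sum_smul, smul_mul_assoc]
    exact smul_ne_zero (L.tauS_ne_zero (by simp [Fin.val_rev]; omega))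
      (L.E_mul_Estar_zero_ne_zero _)

theorem trace_etaA_mul_Estar_ne_zero {r : ℕ} (hr : r ≤ d) :
    (L.etaA r * L.Estar 0).trace ≠ 0 := by
  refine L.trace_mul_Estar_ne_zero (IsUnreducedHessenberg.first_mul_ne_zero (e := L.E)
    (θ' := L.θs) (k := ⟨d - r, by omega⟩) (r := r) ?_ L.completeOrthogonalIdempotents L.rank_E
    L.dual.completeOrthogonalIdempotents (by simp; omega) ?_ ?_ ?_)
  · rw [← L.As_eq]
    exact L.isUnreducedHessenberg
  · intro j hj
    rw [etaA_eq_aeval]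
    exact L.Estar_mul_aeval_mul_Estar_eq_zero _ (by simpa using hj)
  · intro j hj
    rw [← mul_assoc, L.etaA_eq_sum, L.completeOrthogonalIdempotents.mul_sum_smul,
      L.etaS_eq_zero (by simp only at hj; omega), zero_smul, zero_mul]
  · rw [← mul_assoc, L.etaA_eq_sum, L.completeOrthogonalIdempotents.mul_sum_smul,
      smul_mul_assoc]
    exact smul_ne_zero (L.etaS_ne_zero (by simp; omega)) (L.E_mul_Estar_zero_ne_zero _)

theorem varphiProd_eq {r : ℕ} (hr : r ≤ d) :
    L.varphiProd r =
      (∏ j ∈ Finset.range r, (L.θsN 0 - L.θsN (j + 1))) * (L.tauA r * L.Estar 0).trace := by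
  have h := Finset.prod_range_mul_div_telescope (r := r) (fun j => L.θsN 0 - L.θsN (j + 1))
    (fun j => (L.tauA j * L.Estar 0).trace)
    fun j hj => L.trace_tauA_mul_Estar_ne_zero (r := j) (by omega)
  have h0 : (L.tauA 0 * L.Estar 0).trace = 1 := by
    rw [tauA, one_mul]
    exact L.dual.trace_E 0
  rw [h0, mul_one] at h
  simpa [varphiProd, varphi] using h

theorem phiProd_eq {r : ℕ} (hr : r ≤ d) :
    L.phiProd r =
      (∏ j ∈ Finset.range r, (L.θsN 0 - L.θsN (j + 1))) * (L.etaA r * L.Estar 0).trace := by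
  have h := Finset.prod_range_mul_div_telescope (r := r) (fun j => L.θsN 0 - L.θsN (j + 1))
    (fun j => (L.etaA j * L.Estar 0).trace)
    fun j hj => L.trace_etaA_mul_Estar_ne_zero (r := j) (by omega)
  have h0 : (L.etaA 0 * L.Estar 0).trace = 1 := by
    rw [etaA, one_mul]
    exact L.dual.trace_E 0
  rw [h0, mul_one] at h
  simpa [phiProd, phi] using h

theorem prod_θsN_sub_ne_zero : ∏ j ∈ Finset.range d, (L.θsN 0 - L.θsN (j + 1)) ≠ 0 := by
  refine Finset.prod_ne_zero_iff.mpr fun j hj => sub_ne_zero.mpr fun h => ?_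
  have hj := Finset.mem_range.mp hj
  rw [show j + 1 = ((⟨j + 1, by omega⟩ : Fin (d + 1)) : ℕ) from rfl,
    show (0 : ℕ) = ((0 : Fin (d + 1)) : ℕ) from rfl, θsN_val, θsN_val] at h
  exact absurd (congrArg Fin.val (L.θs_inj h)) (by simp)

theorem varphiProd_ne_zero : L.varphiProd d ≠ 0 := by
  rw [L.varphiProd_eq le_rfl]
  exact mul_ne_zero L.prod_θsN_sub_ne_zero (L.trace_tauA_mul_Estar_ne_zero le_rfl)

theorem tauA_last : L.tauA d = L.tauS d (L.θ (Fin.last d)) • L.E (Fin.last d) := by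
  rw [tauA_eq_sum, Finset.sum_eq_single (Fin.last d)]
  · intro j _ hj
    rw [L.tauS_eq_zero (Fin.val_lt_last hj), zero_smul]
  · simp

theorem etaA_last : L.etaA d = L.etaS d (L.θ 0) • L.E 0 := by
  rw [etaA_eq_sum, Finset.sum_eq_single 0]
  · intro j _ hj
    have : (j : ℕ) ≠ 0 := fun h => hj (Fin.ext (by simpa using h))
    rw [L.etaS_eq_zero (by omega), zero_smul]
  · simp

theorem Estar_zero_mul_tauA_mul_Estar_last :
    L.Estar 0 * L.tauA d * L.Estar (Fin.last d) =
      L.Estar 0 * L.etaA d * L.Estar (Fin.last d) := by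
  have := mul_aeval_mul_eq_of_isMonicOfDegree (e := L.Estar ∘ Fin.rev) (M := L.A)
    (U := L.Estar (Fin.last d)) (k := 0) (r := d) (p := Lagrange.nodal (Finset.range d) L.θN)
    (q := Lagrange.nodal (Finset.range d) fun j => L.θN (d - j))
    L.dual.completeOrthogonalIdempotents_rev.complete
    L.dual.isUnreducedHessenberg_rev.mul_mul_eq_zero
    (fun j hj => L.dual.E_mul_E_of_ne (by simp [Fin.ext_iff, Fin.val_rev] at hj ⊢; omega))
    ⟨by simp, Lagrange.nodal_monic⟩ ⟨by simp, Lagrange.nodal_monic⟩ (Fin.last d) (by simp)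
  simpa [tauA_eq_aeval, etaA_eq_aeval] using this

theorem phiProd_mul_eq_varphiProd_mul {ξ0 ξd ξs0 ξsd f0 fd g0 : Fin (d + 1) → K}
    (hf0 : L.E 0 = vecMulVec ξ0 f0) (hfd : L.E (Fin.last d) = vecMulVec ξd fd)
    (hg0 : L.Estar 0 = vecMulVec ξs0 g0) (hEsd : L.Estar (Fin.last d) *ᵥ ξsd = ξsd) :
    L.phiProd d * (fd ⬝ᵥ ξs0) * (f0 ⬝ᵥ ξsd) = L.varphiProd d * (f0 ⬝ᵥ ξs0) * (fd ⬝ᵥ ξsd) := by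
  have hξs0 : ξs0 ≠ 0 := by
    rintro rfl
    exact L.Es_ne 0 (by rw [hg0, zero_vecMulVec])
  have hkey := congrArg (· *ᵥ ξsd) L.Estar_zero_mul_tauA_mul_Estar_last
  simp only [← mulVec_mulVec, hEsd, L.tauA_last, L.etaA_last, smul_mulVec, hf0, hfd, hg0,
    vecMulVec_mulVec, op_smul_eq_smul, mulVec_smul, smul_smul] at hkey
  have hscalar := smul_left_injective K hξs0 hkey
  rw [L.phiProd_eq le_rfl, L.varphiProd_eq le_rfl, L.tauA_last, L.etaA_last, smul_mul_assoc,
    smul_mul_assoc, trace_smul, trace_smul, hf0, hfd, hg0, vecMulVec_mul_vecMulVec,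
    vecMulVec_mul_vecMulVec, trace_vecMulVec, trace_vecMulVec]
  rw [dotProduct_comm ξ0, dotProduct_comm ξd]
  simp only [smul_dotProduct, smul_eq_mul]
  linear_combination (-(∏ j ∈ Finset.range d, (L.θsN 0 - L.θsN (j + 1))) * (fd ⬝ᵥ ξs0) *
    (f0 ⬝ᵥ ξs0)) * hscalar

theorem dotProduct_div_dotProduct_eq {ξ0 ξd ξs0 ξsd f0 fd g0 : Fin (d + 1) → K}
    (hf0 : L.E 0 = vecMulVec ξ0 f0) (hfd : L.E (Fin.last d) = vecMulVec ξd fd)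
    (hg0 : L.Estar 0 = vecMulVec ξs0 g0) (hEsd : L.Estar (Fin.last d) *ᵥ ξsd = ξsd)
    (hξsd : ξsd ≠ 0) :
    f0 ⬝ᵥ ξs0 / f0 ⬝ᵥ ξsd = L.phiProd d / L.varphiProd d * (fd ⬝ᵥ ξs0 / fd ⬝ᵥ ξsd) := by
  have h0 := dotProduct_ne_zero_of_vecMulVec_mulVec_ne_zero
    (hf0 ▸ L.E_mulVec_ne_zero_of_Estar_last hEsd hξsd 0)
  have hd := dotProduct_ne_zero_of_vecMulVec_mulVec_ne_zero
    (hfd ▸ L.E_mulVec_ne_zero_of_Estar_last hEsd hξsd _)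
  rw [div_mul_div_comm, div_eq_div_iff h0 (mul_ne_zero L.varphiProd_ne_zero hd)]
  linear_combination (L.phiProd_mul_eq_varphiProd_mul hf0 hfd hg0 hEsd).symm

end LeonardSystem

theorem LeonardSystem.bilin_ratio_general {K : Type*} [Field K] {d : ℕ}
    (L : LeonardSystem K d)
    (σ : (Matrix (Fin (d+1)) (Fin (d+1)) K) →ₗ[K] Matrix (Fin (d+1)) (Fin (d+1)) K)
    (hanti : ∀ X Y, σ (X * Y) = σ Y * σ X) (hbij : Function.Bijective σ)
    (hA : σ L.A = L.A) (hAs : σ L.Astar = L.Astar)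
    (B : (Fin (d+1) → K) →ₗ[K] (Fin (d+1) → K) →ₗ[K] K)
    (hcomp : ∀ (X : Matrix (Fin (d+1)) (Fin (d+1)) K) (u v : Fin (d+1) → K),
      B (X.mulVec u) v = B u ((σ X).mulVec v))
    (ξ0 ξd ξs0 ξsd : Fin (d+1) → K)
    (hξ0 : ξ0 ≠ 0) (hξd : ξd ≠ 0) (hξs0 : ξs0 ≠ 0) (hξsd : ξsd ≠ 0)
    (hE0 : (L.E 0).mulVec ξ0 = ξ0) (hEd : (L.E (Fin.last d)).mulVec ξd = ξd)
    (hEs0 : (L.Estar 0).mulVec ξs0 = ξs0) (hEsd : (L.Estar (Fin.last d)).mulVec ξsd = ξsd) :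
    B ξ0 ξs0 / B ξ0 ξsd = L.phiProd d / L.varphiProd d * (B ξd ξs0 / B ξd ξsd) := by
  have hσ1 : σ 1 = 1 := map_one_of_antimul_of_surjective hanti hbij.2
  obtain ⟨f0, hf0⟩ := exists_eq_vecMulVec_of_rank_eq_one (L.rank_E 0) hE0 hξ0
  obtain ⟨fd, hfd⟩ := exists_eq_vecMulVec_of_rank_eq_one (L.rank_E _) hEd hξd
  obtain ⟨g0, hg0⟩ := exists_eq_vecMulVec_of_rank_eq_one (L.rank_Estar 0) hEs0 hξs0
  have hσEs0 : σ (L.Estar 0) = L.Estar 0 := L.dual.map_E hanti hσ1 hAs 0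
  rw [bilin_div_bilin_eq hcomp (L.map_E hanti hσ1 hA 0) hσEs0 hf0 hg0 hE0 hEs0
      (L.E_mulVec_ne_zero_of_Estar_zero hEs0 hξs0 0)
      (L.dual.E_mulVec_ne_zero_of_Estar_zero hE0 hξ0 0),
    bilin_div_bilin_eq hcomp (L.map_E hanti hσ1 hA _) hσEs0 hfd hg0 hEd hEs0
      (L.E_mulVec_ne_zero_of_Estar_zero hEs0 hξs0 _)
      (L.dual.E_mulVec_ne_zero_of_Estar_last hEd hξd 0),
    L.dotProduct_div_dotProduct_eq hf0 hfd hg0 hEsd hξsd]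
  ring

/-- `⟨ξ_0,ξ*_0⟩/⟨ξ_0,ξ*_d⟩ = (ϕ/φ) ⟨ξ_d,ξ*_0⟩/⟨ξ_d,ξ*_d⟩`. -/
theorem LeonardSystem.bilin_ratio {K : Type*} [Field K] {d : ℕ}
    (L : LeonardSystem K d)
    (σ : (Matrix (Fin (d+1)) (Fin (d+1)) K) →ₗ[K] Matrix (Fin (d+1)) (Fin (d+1)) K)
    (hanti : ∀ X Y, σ (X * Y) = σ Y * σ X) (hbij : Function.Bijective σ)
    (hA : σ L.A = L.A) (hAs : σ L.Astar = L.Astar)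
    (B : (Fin (d+1) → K) →ₗ[K] (Fin (d+1) → K) →ₗ[K] K) (hB : B ≠ 0)
    (hcomp : ∀ (X : Matrix (Fin (d+1)) (Fin (d+1)) K) (u v : Fin (d+1) → K),
      B (X.mulVec u) v = B u ((σ X).mulVec v))
    (ξ0 ξd ξs0 ξsd : Fin (d+1) → K)
    (hξ0 : ξ0 ≠ 0) (hξd : ξd ≠ 0) (hξs0 : ξs0 ≠ 0) (hξsd : ξsd ≠ 0)
    (hE0 : (L.E 0).mulVec ξ0 = ξ0) (hEd : (L.E (Fin.last d)).mulVec ξd = ξd)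
    (hEs0 : (L.Estar 0).mulVec ξs0 = ξs0) (hEsd : (L.Estar (Fin.last d)).mulVec ξsd = ξsd) :
    B ξ0 ξs0 / B ξ0 ξsd = L.phiProd d / L.varphiProd d * (B ξd ξs0 / B ξd ξsd) :=
  LeonardSystem.bilin_ratio_general L σ hanti hbij hA hAs B hcomp ξ0 ξd ξs0 ξsd hξ0 hξd hξs0 hξsd
    hE0 hEd hEs0 hEsd
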